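/- arXiv:math/0205253 — 3 statements merged into one kernel-verified Lean document; each statement's English description precedes it below -/
import Mathlib

section
/- Let X be a completely regular Hausdorff topological space and K ⊆ X a compact subset. Suppose f ∈ C(X) has the property that f·g is bounded for each g ∈ C(X) and sup_{x∈X} |f(x)g(x)| ≤ sup_{x∈K} |g(x)| for all g ∈ C(X). Then f has compact support. -/
/-- Let `X` be a completely regular Hausdorff space and `K ⊆ X` compact. If `f ∈ C(X)`
is such that `f·g` is bounded for every `g ∈ C(X)` and `sup_X ‖f·g‖ ≤ sup_K ‖g‖`,
then `f` has compact support. -/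
theorem stmt1 {X : Type*} [TopologicalSpace X] [T2Space X] [CompletelyRegularSpace X]
    (K : Set X) (hK : IsCompact K) (f : C(X, ℂ))
    (hbdd : ∀ g : C(X, ℂ), ∃ M : ℝ, ∀ x : X, ‖f x * g x‖ ≤ M)
    (hsup : ∀ g : C(X, ℂ), ∀ x : X, ‖f x * g x‖ ≤ ⨆ y : K, ‖g y‖) :
    HasCompactSupport f := by
  have hsub : Function.support f ⊆ K := by
    intro x hx
    by_contra hxK
    obtain ⟨u, hu, hux, huK⟩ :=
      CompletelyRegularSpace.completely_regular x K hK.isClosed hxK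
    set g : C(X, ℂ) := ⟨fun y => ((1 - (u y : ℝ) : ℝ) : ℂ), by
      exact Complex.continuous_ofReal.comp (continuous_const.sub
        (continuous_induced_dom.comp hu))⟩ with hg
    have h0 : ∀ y : K, ‖g y‖ = 0 := by
      intro ⟨y, hy⟩
      simp [hg, huK hy]
    have hsup0 : (⨆ y : K, ‖g y‖) ≤ 0 := by
      rcases isEmpty_or_nonempty K with h | h
      · simp [Real.iSup_of_isEmpty]
      · exact ciSup_le fun y => le_of_eq (h0 y)
    have h1 : ‖f x * g x‖ = ‖f x‖ := by
      simp [hg, hux]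
    have := (hsup g x).trans hsup0
    rw [h1] at this
    exact hx (norm_le_zero_iff.mp this)
  have : HasCompactSupport f := by
    apply HasCompactSupport.of_support_subset_isCompact hK hsub
  exact this
end

section
/- Let X be a completely regular Hausdorff space, K ⊆ X compact, and f ∈ C(X) such that sup_X |fg| ≤ sup_K |g| for every bounded continuous g. Then {x : f(x) ≠ 0} ⊆ K. -/
open Set unitInterval
open scoped BoundedContinuousFunction

theorem CompletelyRegularSpace.exists_boundedContinuous_eq_one_eqOn_zero
    {X : Type*} [TopologicalSpace X] [CompletelyRegularSpace X]
    (𝕜 : Type*) [NormedRing 𝕜] [NormedAlgebra ℝ 𝕜] {K : Set X} {x : X}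
    (hK : IsClosed K) (hx : x ∉ K) :
    ∃ g : X →ᵇ 𝕜, g x = 1 ∧ EqOn g 0 K := by
  obtain ⟨u, hu, hux, huK⟩ := CompletelyRegularSpace.completely_regular x K hK hx
  -- `t ↦ 1 - t` on the compact interval `I` is bounded, hence so is its pullback along `u`.
  let flip : I →ᵇ 𝕜 := .mkOfCompact
    ⟨fun t => algebraMap ℝ 𝕜 (σ t), (continuous_algebraMap ℝ 𝕜).comp
      (continuous_subtype_val.comp continuous_symm)⟩
  refine ⟨flip.compContinuous ⟨u, hu⟩, ?_, fun y hy => ?_⟩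
  · simp [flip, hux]
  · simp [flip, huK hy]

theorem BoundedContinuousFunction.iSup_norm_eq_zero_of_eqOn_zero
    {X E : Type*} [TopologicalSpace X] [SeminormedAddCommGroup E] {K : Set X} {g : X →ᵇ E}
    (hg : EqOn g 0 K) : ⨆ y : K, ‖g y‖ = 0 := by
  simp [fun y : K => hg y.2]

/-- Let `X` be a completely regular Hausdorff space, `K ⊆ X` compact and `f` continuous
with `sup_X ‖f·g‖ ≤ sup_K ‖g‖` for every bounded continuous `g`. Then the nonvanishing
set of `f` is contained in `K`. -/
theorem stmt2 {X : Type*} [TopologicalSpace X] [T2Space X] [CompletelyRegularSpace X]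
    (K : Set X) (hK : IsCompact K) (f : C(X, ℂ))
    (hsup : ∀ g : BoundedContinuousFunction X ℂ, ∀ x : X, ‖f x * g x‖ ≤ ⨆ y : K, ‖g y‖) :
    {x : X | f x ≠ 0} ⊆ K := by
  intro x hfx
  by_contra hxK
  obtain ⟨g, hgx, hgK⟩ :=
    CompletelyRegularSpace.exists_boundedContinuous_eq_one_eqOn_zero ℂ hK.isClosed hxK
  have hbound := hsup g x
  rw [hgx, mul_one, g.iSup_norm_eq_zero_of_eqOn_zero hgK] at hbound
  exact hfx (norm_le_zero_iff.mp hbound)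
end

section
/- Let J be a normed *-algebra with a contractive approximate identity and let (S,T) be a double multiplier of J (i.e. xS(y) = T(x)y for all x,y ∈ J, with S,T linear). Then S is bounded if and only if T is bounded, and in that case ‖S‖ = ‖T‖. -/
open Filter Topology

/-- Let `J` be a normed *-algebra with a contractive approximate identity, and `(S, T)`
a double multiplier of `J` with `S`, `T` additive. Then `S` is bounded iff `T` is bounded,
and they admit exactly the same bounds, i.e. `‖S‖ = ‖T‖`. -/
theorem stmt12 {J : Type*} [NonUnitalNormedRing J] [StarRing J] [NormedStarGroup J]
    {ι : Type*} [SemilatticeSup ι] [Nonempty ι] (e : ι → J)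
    (he_contr : ∀ l, ‖e l‖ ≤ 1)
    (he_left : ∀ x : J, Tendsto (fun l => e l * x) atTop (𝓝 x))
    (he_right : ∀ x : J, Tendsto (fun l => x * e l) atTop (𝓝 x))
    (S T : J → J)
    (hSadd : ∀ x y : J, S (x + y) = S x + S y) (hTadd : ∀ x y : J, T (x + y) = T x + T y)
    (hST : ∀ x y : J, x * S y = T x * y) :
    ((∃ C : ℝ, ∀ x : J, ‖S x‖ ≤ C * ‖x‖) ↔ (∃ C : ℝ, ∀ x : J, ‖T x‖ ≤ C * ‖x‖)) ∧
      (∀ C : ℝ, 0 ≤ C →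
        ((∀ x : J, ‖S x‖ ≤ C * ‖x‖) ↔ (∀ x : J, ‖T x‖ ≤ C * ‖x‖))) := by
  have key1 : ∀ C : ℝ, 0 ≤ C → (∀ x : J, ‖T x‖ ≤ C * ‖x‖) → ∀ y : J, ‖S y‖ ≤ C * ‖y‖ := by
    intro C hC hT y
    refine le_of_tendsto ((he_left (S y)).norm) (Eventually.of_forall fun l => ?_)
    calc ‖e l * S y‖ = ‖T (e l) * y‖ := by rw [hST]
      _ ≤ ‖T (e l)‖ * ‖y‖ := norm_mul_le _ _
      _ ≤ (C * ‖e l‖) * ‖y‖ := by gcongr; exact hT _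
      _ ≤ (C * 1) * ‖y‖ := by gcongr; exact he_contr l
      _ = C * ‖y‖ := by ring
  have key2 : ∀ C : ℝ, 0 ≤ C → (∀ x : J, ‖S x‖ ≤ C * ‖x‖) → ∀ y : J, ‖T y‖ ≤ C * ‖y‖ := by
    intro C hC hS y
    refine le_of_tendsto ((he_right (T y)).norm) (Eventually.of_forall fun l => ?_)
    calc ‖T y * e l‖ = ‖y * S (e l)‖ := by rw [hST]
      _ ≤ ‖y‖ * ‖S (e l)‖ := norm_mul_le _ _
      _ ≤ ‖y‖ * (C * ‖e l‖) := by gcongr; exact hS _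
      _ ≤ ‖y‖ * (C * 1) := by gcongr; exact he_contr l
      _ = C * ‖y‖ := by ring
  constructor
  · constructor
    · rintro ⟨C, hS⟩
      refine ⟨max C 0, key2 _ (le_max_right _ _) fun x => ?_⟩
      exact (hS x).trans (by gcongr; exact le_max_left _ _)
    · rintro ⟨C, hT⟩
      refine ⟨max C 0, key1 _ (le_max_right _ _) fun x => ?_⟩
      exact (hT x).trans (by gcongr; exact le_max_left _ _)
  · exact fun C hC => ⟨key2 C hC, key1 C hC⟩
end
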